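/- If N_l = ⌈αN_h⌉ for fixed α ∈ (0,1) and N_h → ∞, the PAPR of generalized disc-GAM, 2*N*N_h/(N_h(N_h+1) - N_l(N_l-1)) with N = N_h - N_l + 1, converges to 2(1-α)/(1-α²) = 2/(1+α); in particular it can be made arbitrarily close to 1 by taking α close to 1. -/
import Mathlib


open Finset Real Filter

theorem disc_gam_papr_limit (α : ℝ) (hα : α ∈ Set.Ioo (0 : ℝ) 1) :
    Filter.Tendsto
      (fun Nh : ℕ =>
        (2 * ((Nh : ℝ) - (⌈α * Nh⌉₊ : ℝ) + 1) * (Nh : ℝ)) /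
          ((Nh : ℝ) * ((Nh : ℝ) + 1) - (⌈α * Nh⌉₊ : ℝ) * ((⌈α * Nh⌉₊ : ℝ) - 1)))
      Filter.atTop (nhds (2 / (1 + α))) ∧
    ∀ ε > (0 : ℝ), ∃ β ∈ Set.Ioo (0 : ℝ) 1, |2 / (1 + β) - 1| < ε := by
  obtain ⟨hα0, hα1⟩ := hα
  constructor
  · -- f n = ⌈αn⌉/n tends to α
    set f : ℕ → ℝ := fun n => (⌈α * n⌉₊ : ℝ) / n with hfdef
    have hinv : Tendsto (fun n : ℕ => 1 / (n : ℝ)) atTop (nhds 0) :=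
      tendsto_one_div_atTop_nhds_zero_nat
    have hf : Tendsto f atTop (nhds α) := by
      apply tendsto_of_tendsto_of_tendsto_of_le_of_le'
        (g := fun _ : ℕ => α) (h := fun n : ℕ => α + 1 / n) tendsto_const_nhds
      · simpa using tendsto_const_nhds.add hinv
      · filter_upwards [eventually_ge_atTop 1] with n hn
        have hn0 : (0 : ℝ) < n := by exact_mod_cast hn
        simp only [hfdef]
        rw [le_div_iff₀ hn0]
        exact Nat.le_ceil _
      · filter_upwards [eventually_ge_atTop 1] with n hn
        have hn0 : (0 : ℝ) < n := by exact_mod_cast hn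
        simp only [hfdef]
        rw [div_le_iff₀ hn0]
        have h1 : (⌈α * n⌉₊ : ℝ) < α * n + 1 :=
          Nat.ceil_lt_add_one (by positivity)
        have : (α + 1 / n) * n = α * n + 1 := by field_simp
        linarith
    have hden : Tendsto (fun n : ℕ => (1 + 1 / (n : ℝ)) - f n * (f n - 1 / n))
        atTop (nhds (1 - α ^ 2)) := by
      have := (((tendsto_const_nhds (x := (1:ℝ))).add hinv).sub ((hf.mul (hf.sub hinv))))
      convert this using 2
      ring
    have hnum : Tendsto (fun n : ℕ => 2 * (1 - f n + 1 / (n : ℝ)))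
        atTop (nhds (2 * (1 - α))) := by
      have := (tendsto_const_nhds (x := (2:ℝ))).mul
        (((tendsto_const_nhds (x := (1:ℝ))).sub hf).add hinv)
      simpa using this
    have hd0 : (1 : ℝ) - α ^ 2 ≠ 0 := by nlinarith
    have hmain : Tendsto (fun n : ℕ =>
        (2 * (1 - f n + 1 / (n : ℝ))) / ((1 + 1 / (n : ℝ)) - f n * (f n - 1 / n)))
        atTop (nhds (2 * (1 - α) / (1 - α ^ 2))) := hnum.div hden hd0
    have hval : 2 * (1 - α) / (1 - α ^ 2) = 2 / (1 + α) := by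
      have h1 : (1 : ℝ) + α ≠ 0 := by linarith
      have h2 : (1 : ℝ) - α ≠ 0 := by linarith
      field_simp
      ring
    rw [← hval]
    apply hmain.congr'
    filter_upwards [eventually_ge_atTop 1] with n hn
    have hn0 : (0 : ℝ) < n := by exact_mod_cast hn
    have hn0' : (n : ℝ) ≠ 0 := ne_of_gt hn0
    simp only [hfdef]
    have hN : 2 * ((n : ℝ) - (⌈α * n⌉₊ : ℝ) + 1) * n
        = n ^ 2 * (2 * (1 - (⌈α * n⌉₊ : ℝ) / n + 1 / n)) := by
      field_simp
    have hD : (n : ℝ) * (n + 1) - (⌈α * n⌉₊ : ℝ) * ((⌈α * n⌉₊ : ℝ) - 1)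
        = n ^ 2 * ((1 + 1 / n) - ((⌈α * n⌉₊ : ℝ) / n) * ((⌈α * n⌉₊ : ℝ) / n - 1 / n)) := by
      field_simp
    rw [hN, hD, mul_div_mul_left _ _ (pow_ne_zero 2 hn0')]
  · intro ε hε
    refine ⟨max (1 - ε / 2) (1 / 2), ⟨?_, ?_⟩, ?_⟩
    · have : (0:ℝ) < 1/2 := by norm_num
      exact lt_of_lt_of_le this (le_max_right _ _)
    · apply max_lt <;> nlinarith
    · set β := max (1 - ε / 2) (1 / 2) with hβ
      have hβ0 : (0:ℝ) < β := lt_of_lt_of_le (by norm_num) (le_max_right _ _)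
      have hβ1 : β < 1 := by apply max_lt <;> nlinarith
      have hβge : 1 - ε / 2 ≤ β := le_max_left _ _
      have h1 : (0:ℝ) < 1 + β := by linarith
      have hval : 2 / (1 + β) - 1 = (1 - β) / (1 + β) := by field_simp; ring
      rw [hval, abs_of_nonneg (div_nonneg (by linarith) (le_of_lt h1))]
      rw [div_lt_iff₀ h1]
      nlinarith
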